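/- Let N ≥ 1, γ ≥ 0, R > 0, T > 0, and let x_n : [0, T] → ℝ and q_n : [0, T] → ℝ, n = 1,…,N, be differentiable functions satisfying the agent-based contagion system q_n′(t) = γ·max{q_n*(t) − q_n(t), 0} with q_n*(t) = (∑_{m=1}^N κ(|x_n(t) − x_m(t)|)·q_m(t))/(∑_{m=1}^N κ(|x_n(t) − x_m(t)|)) and κ(r) = R/((r² + R²)·π). If q_n(0) ∈ [0,1] for every n, then q_n(t) ∈ [0,1] for every n and every t ∈ [0, T]. Moreover, if q_n(0) = 1 for some n, then q_n(t) = 1 for all t ∈ [0, T]. -/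

import Mathlib

/-! Every `q_n` is nondecreasing because its derivative is nonnegative, which gives the lower
bound and, once `q_n ≤ 1` is known, the constancy of spreading individuals. For the upper bound:
whenever `q_n` is the largest exposure, its kernel-weighted average `q_n*` is at most `q_n`, so
`q_n' = 0`. Hence no exposure can be the first to cross the barrier `1 + ε t`, and letting
`ε → 0` gives `q_n ≤ 1`. -/

open Set Filter Topology

theorem HasDerivWithinAt.eventually_nhdsGT_lt_of_deriv_neg {g : ℝ → ℝ} {g' a b x : ℝ}
    (hg : HasDerivWithinAt g g' (Icc a b) x) (hg' : g' < 0) (hx : x ∈ Ico a b) :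
    ∀ᶠ z in 𝓝[>] x, g z < g x := by
  have hslope := (hg.mono (Ioo_subset_Icc_self.trans (Icc_subset_Icc_left hx.1))).limsup_slope_le'
    (lt_irrefl x ∘ And.left) hg'
  rw [nhdsWithin_Ioo_eq_nhdsGT hx.2] at hslope
  filter_upwards [hslope, self_mem_nhdsWithin] with z hz (hxz : x < z)
  rw [slope_def_field, div_lt_iff₀ (sub_pos.2 hxz), zero_mul, sub_neg] at hz
  exact hz

theorem forall_image_le_of_deriv_lt_deriv_boundary {ι : Type*} [Finite ι]
    {f f' : ι → ℝ → ℝ} {B B' : ℝ → ℝ} {a b : ℝ}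
    (hf : ∀ i, ∀ x ∈ Icc a b, HasDerivWithinAt (f i) (f' i x) (Icc a b) x)
    (hB : ∀ x ∈ Icc a b, HasDerivWithinAt B (B' x) (Icc a b) x)
    (ha : ∀ i, f i a ≤ B a)
    (bound : ∀ x ∈ Ico a b, (∀ j, f j x ≤ B x) → ∀ i, f i x = B x → f' i x < B' x) :
    ∀ x ∈ Icc a b, ∀ i, f i x ≤ B x := by
  set s := {x | ∀ i, f i x ≤ B x}
  have hfB : ∀ i, ∀ x ∈ Icc a b, HasDerivWithinAt (fun z => f i z - B z) (f' i x - B' x)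
      (Icc a b) x := fun i x hx => (hf i x hx).sub (hB x hx)
  have hclosed : IsClosed (s ∩ Icc a b) := by
    have hs : s ∩ Icc a b = Icc a b ∩ ⋂ i, {x ∈ Icc a b | f i x ≤ B x} := by
      ext x
      exact ⟨fun ⟨h, hx⟩ => ⟨hx, mem_iInter.2 fun i => ⟨hx, h i⟩⟩,
        fun ⟨hx, h⟩ => ⟨fun i => (mem_iInter.1 h i).2, hx⟩⟩
    rw [hs]
    exact isClosed_Icc.inter <| isClosed_iInter fun i => isClosed_Icc.isClosed_le
      (fun x hx => (hf i x hx).continuousWithinAt) fun x hx => (hB x hx).continuousWithinAt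
  refine fun x hx => hclosed.Icc_subset_of_forall_mem_nhdsWithin ha ?_ hx
  rintro x ⟨hxs, hx⟩
  refine eventually_all.2 fun i => ?_
  rcases (hxs i).lt_or_eq with hlt | heq
  · have hcont := (hfB i x (Ico_subset_Icc_self hx)).continuousWithinAt.mono
      (Ioo_subset_Icc_self.trans (Icc_subset_Icc_left hx.1))
    rw [ContinuousWithinAt, nhdsWithin_Ioo_eq_nhdsGT hx.2] at hcont
    filter_upwards [hcont.eventually (gt_mem_nhds (sub_neg.2 hlt))] with z hz
    exact (sub_neg.1 hz).le
  · filter_upwards [(hfB i x (Ico_subset_Icc_self hx)).eventually_nhdsGT_lt_of_deriv_neg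
      (sub_neg.2 (bound x hx hxs i heq)) hx] with z hz
    linarith

theorem forall_image_le_of_deriv_nonpos_at_max {ι : Type*} [Finite ι] {f f' : ι → ℝ → ℝ}
    {a b C : ℝ} (hf : ∀ i, ∀ x ∈ Icc a b, HasDerivWithinAt (f i) (f' i x) (Icc a b) x)
    (ha : ∀ i, f i a ≤ C) (bound : ∀ x ∈ Ico a b, ∀ i, (∀ j, f j x ≤ f i x) → f' i x ≤ 0) :
    ∀ x ∈ Icc a b, ∀ i, f i x ≤ C := by
  intro x hx i
  have hbarrier : ∀ ε > 0, f i x ≤ C + ε * (x - a) := by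
    intro ε hε
    refine forall_image_le_of_deriv_lt_deriv_boundary hf
      (B := fun y => C + ε * (y - a)) (B' := fun _ => ε)
      (fun y _ => by simpa using (((hasDerivAt_id y).sub_const a).const_mul ε).const_add C
        |>.hasDerivWithinAt) (by simpa using ha) ?_ x hx i
    intro y hy hle j heq
    exact (bound y hy j fun k => heq ▸ hle k).trans_lt hε
  have hlim : Tendsto (fun ε => C + ε * (x - a)) (𝓝[>] 0) (𝓝 C) := by
    have : Continuous (fun ε : ℝ => C + ε * (x - a)) := by fun_prop
    simpa using (this.tendsto 0).mono_left nhdsWithin_le_nhds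
  exact ge_of_tendsto hlim (eventually_nhdsWithin_of_forall hbarrier)

theorem contagion_system_invariance_general
    (N : ℕ) (γ R T : ℝ) (hγ : 0 ≤ γ) (hR : 0 < R)
    (x q : Fin N → ℝ → ℝ)
    (κ : ℝ → ℝ) (hκ : ∀ r : ℝ, κ r = R / ((r ^ 2 + R ^ 2) * Real.pi))
    (qstar : Fin N → ℝ → ℝ)
    (hqstar : ∀ (n : Fin N) (t : ℝ),
      qstar n t = (∑ m : Fin N, κ (|x n t - x m t|) * q m t)
                    / (∑ m : Fin N, κ (|x n t - x m t|)))
    (hq : ∀ n : Fin N, ∀ t ∈ Set.Icc (0:ℝ) T,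
      HasDerivWithinAt (q n) (γ * max (qstar n t - q n t) 0) (Set.Icc (0:ℝ) T) t)
    (h0 : ∀ n : Fin N, q n 0 ∈ Set.Icc (0:ℝ) 1) :
    (∀ n : Fin N, ∀ t ∈ Set.Icc (0:ℝ) T, q n t ∈ Set.Icc (0:ℝ) 1) ∧
    (∀ n : Fin N, q n 0 = 1 → ∀ t ∈ Set.Icc (0:ℝ) T, q n t = 1) := by
  have hκpos : ∀ r, 0 < κ r := fun r => by rw [hκ]; positivity
  have hstar_le_max : ∀ t n, (∀ m, q m t ≤ q n t) → qstar n t ≤ q n t := by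
    intro t n hmax
    calc qstar n t = Finset.univ.centerMass (fun m => κ |x n t - x m t|) (q · t) := by
          rw [hqstar, Finset.centerMass, smul_eq_mul, inv_mul_eq_div]; simp only [smul_eq_mul]
      _ ≤ _ := Finset.centerMass_le_sup (fun m _ => (hκpos _).le)
          (Finset.sum_pos (fun m _ => hκpos _) ⟨n, Finset.mem_univ n⟩)
      _ ≤ q n t := Finset.sup'_le _ _ fun m _ => hmax m
  have hmono : ∀ n, MonotoneOn (q n) (Icc 0 T) := fun n =>
    monotoneOn_of_hasDerivWithinAt_nonneg (convex_Icc 0 T)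
      (fun t ht => (hq n t ht).continuousWithinAt)
      (fun t ht => (hq n t (interior_subset ht)).mono interior_subset)
      fun t _ => mul_nonneg hγ (le_max_right _ _)
  have hle_one : ∀ t ∈ Icc 0 T, ∀ n, q n t ≤ 1 :=
    forall_image_le_of_deriv_nonpos_at_max (f' := fun n t => γ * max (qstar n t - q n t) 0) hq
      (fun n => (h0 n).2) fun t _ n hmax => by
        rw [max_eq_right (sub_nonpos.2 (hstar_le_max t n hmax)), mul_zero]
  have hinit_le : ∀ n, ∀ t ∈ Icc 0 T, q n 0 ≤ q n t := fun n t ht =>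
    hmono n ⟨le_rfl, ht.1.trans ht.2⟩ ht ht.1
  exact ⟨fun n t ht => ⟨(h0 n).1.trans (hinit_le n t ht), hle_one t ht n⟩,
    fun n hn t ht => (hle_one t ht n).antisymm (hn ▸ hinit_le n t ht)⟩

/-- In the agent-based contagion system
`q_n′ = γ max{q_n* - q_n, 0}` with kernel-weighted averages `q_n*`, exposures that
start in `[0,1]` stay in `[0,1]`, and spreading individuals (`q_n(0) = 1`) keep
`q_n(t) = 1` for all times. -/
theorem contagion_system_invariance
    (N : ℕ) (hN : 0 < N) (γ R T : ℝ) (hγ : 0 ≤ γ) (hR : 0 < R) (hT : 0 < T)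
    (x q : Fin N → ℝ → ℝ)
    (κ : ℝ → ℝ) (hκ : ∀ r : ℝ, κ r = R / ((r ^ 2 + R ^ 2) * Real.pi))
    (qstar : Fin N → ℝ → ℝ)
    (hqstar : ∀ (n : Fin N) (t : ℝ),
      qstar n t = (∑ m : Fin N, κ (|x n t - x m t|) * q m t)
                    / (∑ m : Fin N, κ (|x n t - x m t|)))
    (hx : ∀ n : Fin N, ∀ t ∈ Set.Icc (0:ℝ) T,
      DifferentiableWithinAt ℝ (x n) (Set.Icc (0:ℝ) T) t)
    (hq : ∀ n : Fin N, ∀ t ∈ Set.Icc (0:ℝ) T,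
      HasDerivWithinAt (q n) (γ * max (qstar n t - q n t) 0) (Set.Icc (0:ℝ) T) t)
    (h0 : ∀ n : Fin N, q n 0 ∈ Set.Icc (0:ℝ) 1) :
    (∀ n : Fin N, ∀ t ∈ Set.Icc (0:ℝ) T, q n t ∈ Set.Icc (0:ℝ) 1) ∧
    (∀ n : Fin N, q n 0 = 1 → ∀ t ∈ Set.Icc (0:ℝ) T, q n t = 1) :=
  contagion_system_invariance_general N γ R T hγ hR x q κ hκ qstar hqstar hq h0
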